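/- Let DB be a finite uncertain database whose events take nonnegative values. For any pattern β and any item i, expSup_DB(β ++ ⟨{i}⟩) ≤ expSup^cap_DB(β ++ ⟨{i}⟩). (Lemma 1: expSup^cap is an upper bound on the expected support.) -/

import Mathlib

open scoped Classical

noncomputable section

variable {I : Type*}

/-- `js` is an occurrence of pattern `α` in uncertain sequence `S`:
a strictly increasing list of 1-based positions `1 ≤ j₁ < ⋯ < jₘ ≤ n`. -/
def IsOcc (S : List (I → ℝ)) (α : List (Finset I)) (js : List ℕ) : Prop :=
  js.length = α.length ∧ List.Pairwise (· < ·) js ∧ ∀ j ∈ js, 1 ≤ j ∧ j ≤ S.length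

/-- The probability of the occurrence `js` of pattern `α` in `S`:
`∏ₖ ∏_{i ∈ eₖ} p_{jₖ}(i)`. -/
def occProb (S : List (I → ℝ)) (α : List (Finset I)) (js : List ℕ) : ℝ :=
  ((α.zip js).map fun ej => ∏ i ∈ ej.1, S.getD (ej.2 - 1) (fun _ => (0 : ℝ)) i).prod

/-- `maxPr_S(α)`: the maximum occurrence probability of `α` in `S`
(`0` if there is no occurrence, since `sSup ∅ = 0` in `ℝ`; `1` for the empty pattern). -/
def maxPr (S : List (I → ℝ)) (α : List (Finset I)) : ℝ :=
  sSup {x : ℝ | ∃ js, IsOcc S α js ∧ occProb S α js = x}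

/-- `α ⊑ α'`: there are positions `j₁ < ⋯ < jₘ` in `α'` with `eₖ ⊆ e'_{jₖ}` for all `k`. -/
def IsSubpattern (α α' : List (Finset I)) : Prop :=
  ∃ β : List (Finset I), List.Forall₂ (· ⊆ ·) α β ∧ β.Sublist α'

/-- Expected support of `α` in a database `DB`. -/
def expSup (DB : List (List (I → ℝ))) (α : List (Finset I)) : ℝ :=
  (DB.map fun S => maxPr S α).sum

/-- `maxPr_DB(α) = max_{S ∈ DB} maxPr_S(α)`, `0` for an empty database. -/
def maxPrDB (DB : List (List (I → ℝ))) (α : List (Finset I)) : ℝ :=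
  (DB.map fun S => maxPr S α).foldr max 0

/-- `expSup^cap_DB(β ++ ⟨{i}⟩) = maxPr_DB(β) · Σ_{S ∈ DB} maxPr_S(⟨{i}⟩)`. -/
def expSupCap (DB : List (List (I → ℝ))) (β : List (Finset I)) (i : I) : ℝ :=
  maxPrDB DB β * expSup DB [{i}]

/-- Support count of item `i`: the number of sequences `S ∈ DB` with `maxPr_S(⟨{i}⟩) > 0`. -/
def supCount (DB : List (List (I → ℝ))) (i : I) : ℕ :=
  (DB.filter fun S => decide (0 < maxPr S [({i} : Finset I)])).length

/-- The set of items occurring in a pattern. -/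
def pItems (α : List (Finset I)) : Finset I :=
  α.foldr (· ∪ ·) ∅

/-- The size of a pattern: total number of items counted across events. -/
def pSize (α : List (Finset I)) : ℕ :=
  (α.map Finset.card).sum

/-- `sWeight(α)`: the sum of the weights of all items of `α` divided by its size. -/
def sWeight (w : I → ℝ) (α : List (Finset I)) : ℝ :=
  (α.map fun e => ∑ i ∈ e, w i).sum / (pSize α : ℝ)

/-- `wgt^cap_F(α)`: the maximum of `w` over `F ∪ items(α)`. -/
def wgtCap (w : I → ℝ) (F : Finset I) (α : List (Finset I)) : ℝ :=
  (F ∪ pItems α).fold max 0 w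

/-- Weighted expected support: `WES_DB(α) = expSup_DB(α) · sWeight(α)`. -/
def WES (DB : List (List (I → ℝ))) (w : I → ℝ) (α : List (Finset I)) : ℝ :=
  expSup DB α * sWeight w α

/-- The SupCalc array `g_{S,α}(m)`: for nonempty `α`, the maximum probability of an
occurrence of `α` in `S` whose last position is `m` (`0` if none, in particular for `m = 0`);
for the empty pattern it is `1`. -/
def gArr (S : List (I → ℝ)) (α : List (Finset I)) (m : ℕ) : ℝ :=
  if α = [] then 1
  else sSup {x : ℝ | ∃ js, IsOcc S α js ∧ js.getLast? = some m ∧ occProb S α js = x}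

lemma occ_finite (S : List (I → ℝ)) (α : List (Finset I)) :
    {js : List ℕ | IsOcc S α js}.Finite := by
  have hT : {l : List (Fin (S.length + 1)) | l.length = α.length}.Finite :=
    List.finite_length_eq _ _
  have := hT.image (fun l => l.map Fin.val)
  refine this.subset ?_
  rintro js ⟨hlen, _, hb⟩
  refine ⟨js.pmap (fun j h => (⟨j, h⟩ : Fin (S.length + 1))) ?_, ?_, ?_⟩
  · exact fun j hj => Nat.lt_succ_of_le (hb j hj).2
  · simpa using hlen
  · simp [List.map_pmap]

lemma maxPr_bddAbove (S : List (I → ℝ)) (α : List (Finset I)) :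
    BddAbove {x : ℝ | ∃ js, IsOcc S α js ∧ occProb S α js = x} := by
  have : {x : ℝ | ∃ js, IsOcc S α js ∧ occProb S α js = x}
      = occProb S α '' {js | IsOcc S α js} := by
    ext x; simp [Set.mem_image]
  rw [this]
  exact ((occ_finite S α).image _).bddAbove

lemma occProb_nonneg (S : List (I → ℝ)) (hS : ∀ p ∈ S, ∀ i : I, 0 ≤ p i)
    (α : List (Finset I)) (js : List ℕ) : 0 ≤ occProb S α js := by
  apply List.prod_nonneg
  intro x hx
  simp only [List.mem_map] at hx
  obtain ⟨ej, _, rfl⟩ := hx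
  apply Finset.prod_nonneg
  intro i _
  rcases lt_or_ge (ej.2 - 1) S.length with h | h
  · exact hS _ (S.getD_eq_getElem (fun _ => (0:ℝ)) h ▸ S.getElem_mem h) i
  · rw [List.getD_eq_default _ _ h]

lemma maxPr_nonneg (S : List (I → ℝ)) (hS : ∀ p ∈ S, ∀ i : I, 0 ≤ p i)
    (α : List (Finset I)) : 0 ≤ maxPr S α :=
  Real.sSup_nonneg (by rintro x ⟨js, _, rfl⟩; exact occProb_nonneg S hS α js)

lemma le_maxPr (S : List (I → ℝ)) (α : List (Finset I)) (js : List ℕ)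
    (h : IsOcc S α js) : occProb S α js ≤ maxPr S α :=
  le_csSup (maxPr_bddAbove S α) ⟨js, h, rfl⟩

lemma occProb_append (S : List (I → ℝ)) (α α' : List (Finset I)) (js js' : List ℕ)
    (h : js.length = α.length) :
    occProb S (α ++ α') (js ++ js') = occProb S α js * occProb S α' js' := by
  unfold occProb
  rw [List.zip_append h.symm, List.map_append, List.prod_append]

lemma maxPr_append_singleton_le (S : List (I → ℝ)) (hS : ∀ p ∈ S, ∀ i : I, 0 ≤ p i)
    (β : List (Finset I)) (i : I) :
    maxPr S (β ++ [{i}]) ≤ maxPr S β * maxPr S [({i} : Finset I)] := by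
  apply Real.sSup_le
  · rintro x ⟨js, hocc, rfl⟩
    obtain ⟨hlen, hsort, hb⟩ := hocc
    have hne : js ≠ [] := by
      intro h; rw [h] at hlen; simp at hlen
    set j := js.getLast hne with hj
    have hsplit : js = js.dropLast ++ [j] := (List.dropLast_append_getLast hne).symm
    have hlen' : js.dropLast.length = β.length := by
      simp [List.length_dropLast, hlen]
    have hjmem : j ∈ js := List.getLast_mem hne
    have h1 : IsOcc S β js.dropLast :=
      ⟨hlen', hsort.sublist (List.dropLast_sublist js),
        fun x hx => hb x (List.dropLast_subset js hx)⟩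
    have h2 : IsOcc S [({i} : Finset I)] [j] :=
      ⟨by simp, List.pairwise_singleton _ j, by
        intro x hx; simp at hx; subst hx; exact hb j hjmem⟩
    calc occProb S (β ++ [{i}]) js
        = occProb S β js.dropLast * occProb S [({i} : Finset I)] [j] := by
          conv_lhs => rw [hsplit]
          exact occProb_append S β [{i}] js.dropLast [j] hlen'
      _ ≤ maxPr S β * maxPr S [({i} : Finset I)] := by
          apply mul_le_mul (le_maxPr S β _ h1) (le_maxPr S _ _ h2)
            (occProb_nonneg S hS _ _) (maxPr_nonneg S hS β)
  · exact mul_nonneg (maxPr_nonneg S hS β) (maxPr_nonneg S hS _)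

lemma le_foldr_max (l : List ℝ) (x : ℝ) (hx : x ∈ l) : x ≤ l.foldr max 0 := by
  induction l with
  | nil => simp at hx
  | cons a l ih =>
    rcases List.mem_cons.1 hx with rfl | h
    · exact le_max_left _ _
    · exact le_trans (ih h) (le_max_right _ _)

lemma maxPr_le_maxPrDB (DB : List (List (I → ℝ))) (S : List (I → ℝ)) (hS : S ∈ DB)
    (β : List (Finset I)) : maxPr S β ≤ maxPrDB DB β :=
  le_foldr_max _ _ (List.mem_map.2 ⟨S, hS, rfl⟩)

/-- Lemma 1: `expSup^cap` is an upper bound on expected support. -/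
theorem expSup_le_expSupCap
    (DB : List (List (I → ℝ)))
    (hDB : ∀ S ∈ DB, ∀ p ∈ S, ∀ i : I, 0 ≤ p i)
    (β : List (Finset I)) (i : I) :
    expSup DB (β ++ [{i}]) ≤ expSupCap DB β i := by
  unfold expSup expSupCap
  rw [show maxPrDB DB β * expSup DB [{i}] =
      (DB.map fun S => maxPrDB DB β * maxPr S [({i} : Finset I)]).sum by
    simp [expSup, List.sum_map_mul_left]]
  apply List.sum_le_sum
  intro S hS
  calc maxPr S (β ++ [{i}])
      ≤ maxPr S β * maxPr S [({i} : Finset I)] :=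
        maxPr_append_singleton_le S (hDB S hS) β i
    _ ≤ maxPrDB DB β * maxPr S [({i} : Finset I)] :=
        mul_le_mul_of_nonneg_right (maxPr_le_maxPrDB DB S hS β)
          (maxPr_nonneg S (hDB S hS) _)
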